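/- The cardinality of the abacus hook monoid ℌ_{d,n} equals d^{n+1} · Σ_{k=1}^{n} χ_k^{(n)} d^{-k} (1+d)^k, equivalently d · Σ_{k=1}^{n} χ_k^{(n)} d^{n-k} (1+d)^k. -/

import Mathlib

open Finset

/-- `l` encodes a (non-degenerate) indexing matrix on `n` points: the columns,
listed left to right, as pairs `(top entry, bottom entry)`.  Entries lie in
`[0, n-1]`, the first row is strictly increasing, the second row is weakly
increasing, repeated second-row entries are `0`, and each top entry is at
least the corresponding bottom entry. -/
def IsIndexingMatrix (n : ℕ) (l : List (ℕ × ℕ)) : Prop :=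
  1 ≤ l.length ∧ l.length ≤ n ∧
  (∀ p ∈ l, p.1 < n ∧ p.2 ≤ p.1) ∧
  l.Pairwise (fun p q => p.1 < q.1 ∧ p.2 ≤ q.2 ∧ (p.2 = q.2 → p.2 = 0))

/-- A positive indexing matrix: all entries are positive. -/
def IsPositiveIndexingMatrix (n : ℕ) (l : List (ℕ × ℕ)) : Prop :=
  IsIndexingMatrix n l ∧ ∀ p ∈ l, 0 < p.1 ∧ 0 < p.2

/-- `θ_k^{(n)}`: the number of positive indexing matrices whose `(1,1)` entry
equals `k`. -/
noncomputable def theta (n k : ℕ) : ℕ :=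
  Nat.card {l : List (ℕ × ℕ) //
    IsPositiveIndexingMatrix n l ∧ l.head?.map Prod.fst = some k}

/-- The blob-rank of an indexing matrix: the number of its columns containing
a `0`. -/
def blobRank (l : List (ℕ × ℕ)) : ℕ := l.countP (fun p => p.1 == 0 || p.2 == 0)

/-- `Ω_r^{(n)}`: the number of indexing matrices on `n` points of blob-rank `r`,
the degenerate indexing matrix being counted in `Ω_0^{(n)}`. -/
noncomputable def Omega (n r : ℕ) : ℕ :=
  Nat.card {l : List (ℕ × ℕ) // IsIndexingMatrix n l ∧ blobRank l = r} +
    (if r = 0 then 1 else 0)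

/-- `χ_k^{(n)} = Σ_{i₁+⋯+i_k = n-k} C_{i₁} ⋯ C_{i_k}` (Catalan numbers). -/
def chi (n k : ℕ) : ℕ :=
  ∑ t ∈ Finset.Nat.antidiagonalTuple k (n - k), ∏ j, catalan (t j)

/-- A Temperley–Lieb diagram on `n` points: a non-crossing perfect matching of
`2n` boundary points numbered clockwise, given by a fixed-point free
involution. -/
structure TLDiagram (n : ℕ) where
  f : Fin (2 * n) → Fin (2 * n)
  involutive : ∀ x, f (f x) = x
  noFixedPoint : ∀ x, f x ≠ x
  noncrossing : ∀ a b : Fin (2 * n), a < b → b < f a → f a < f b → False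

/-- `a` is the left (smaller) endpoint of an arc of `D`. -/
def TLDiagram.IsArc {n : ℕ} (D : TLDiagram n) (a : Fin (2 * n)) : Prop :=
  a < D.f a

/-- The arc with left endpoint `a` is exposed to the left side of the diagram,
i.e. it is not nested inside any other arc. -/
def TLDiagram.IsExposed {n : ℕ} (D : TLDiagram n) (a : Fin (2 * n)) : Prop :=
  a < D.f a ∧ ∀ c, ¬ (c < a ∧ D.f a < D.f c)

/-- The number of arcs of `D` exposed to the left side. -/
noncomputable def exposedCount {n : ℕ} (D : TLDiagram n) : ℕ :=
  Nat.card {a : Fin (2 * n) // D.IsExposed a}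

/-- A `d`-abacus blob diagram on `n` points: a TL-diagram together with blobs
on some arcs exposed to the left, one bead count in `ℤ/dℤ` on every arc, and
an extra bead count on every blobbed arc (its second component). -/
structure AbacusBlobDiagram (d n : ℕ) where
  base : TLDiagram n
  blob : Fin (2 * n) → Bool
  blob_exposed : ∀ a, blob a = true → base.IsExposed a
  beads₁ : Fin (2 * n) → ZMod d
  beads₂ : Fin (2 * n) → ZMod d
  beads₁_arc : ∀ a, ¬ base.IsArc a → beads₁ a = 0
  beads₂_blob : ∀ a, blob a = false → beads₂ a = 0

/-- A `d`-abacus hook diagram on `n` points: a blobbed TL-diagram in which all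
blobbed arcs are merged into the single hook component through `0, 0'`, with a
bead count in `ℤ/dℤ` on every unblobbed arc and one on the hook component. -/
structure AbacusHookDiagram (d n : ℕ) where
  base : TLDiagram n
  blob : Fin (2 * n) → Bool
  blob_exposed : ∀ a, blob a = true → base.IsExposed a
  beads : Fin (2 * n) → ZMod d
  beads_arc : ∀ a, ¬ base.IsArc a ∨ blob a = true → beads a = 0
  hookBeads : ZMod d

/-!
Forgetting the bead count of the hook, an abacus hook diagram is a TL-diagram `D` together with
a set `S` of blobbed arcs among its `e(D)` exposed arcs and a bead count in `ℤ/dℤ` on each of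
the `n - |S|` remaining arcs. Summing `d ^ (n - |S|)` over `S` gives
`d ^ (n - e(D)) * (1 + d) ^ e(D)`, so it remains to count TL-diagrams by `e(D)`.
Cutting along the arc through the point `0`, a diagram on `n + 1` arcs is an arc enclosing a
diagram on `m` arcs followed by a diagram on `n - m` arcs, and its exposed arcs are the new arc
and the exposed arcs of the second diagram. This gives `|TL_n| = C_n` and the recursion
`χ_{k+1}^{(n+1)} = Σ_i C_i χ_k^{(n-i)}`, which is the decomposition of a tuple into its first
entry and the rest.
-/

namespace TLDiagram

variable {n : ℕ}

@[ext] theorem ext {D₁ D₂ : TLDiagram n} (h : D₁.f = D₂.f) : D₁ = D₂ := by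
  cases D₁; cases D₂; cases h; rfl

theorem f_injective (D : TLDiagram n) : Function.Injective D.f :=
  Function.LeftInverse.injective D.involutive

noncomputable instance : Fintype (TLDiagram n) :=
  Fintype.ofInjective TLDiagram.f fun _ _ => ext

instance (D : TLDiagram n) : DecidablePred D.IsArc :=
  fun a => inferInstanceAs (Decidable (a < D.f a))

instance (D : TLDiagram n) : DecidablePred D.IsExposed :=
  fun a => inferInstanceAs (Decidable (a < D.f a ∧ ∀ c, ¬(c < a ∧ D.f a < D.f c)))

theorem card_eq_two_mul_card_filter_isArc (D : TLDiagram n) {s : Finset (Fin (2 * n))}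
    (hs : ∀ x ∈ s, D.f x ∈ s) : #s = 2 * #{a ∈ s | D.IsArc a} := by
  have h_swap : #{a ∈ s | ¬D.IsArc a} = #{a ∈ s | D.IsArc a} := by
    refine card_nbij' D.f D.f ?_ ?_ (fun x _ => D.involutive x) (fun x _ => D.involutive x)
    · intro x hx
      rw [mem_coe, mem_filter] at hx ⊢
      refine ⟨hs x hx.1, ?_⟩
      rw [IsArc, D.involutive]
      exact lt_of_le_of_ne (not_lt.1 hx.2) (D.noFixedPoint x)
    · intro x hx
      rw [mem_coe, mem_filter] at hx ⊢
      refine ⟨hs x hx.1, ?_⟩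
      rw [IsArc, D.involutive]
      exact not_lt.2 hx.2.le
  rw [← card_filter_add_card_filter_not (s := s) (fun a => D.IsArc a), h_swap]
  omega

theorem card_filter_isArc (D : TLDiagram n) : #{a | D.IsArc a} = n := by
  have := D.card_eq_two_mul_card_filter_isArc (s := univ) fun x _ => mem_univ _
  rw [card_univ, Fintype.card_fin] at this
  omega

theorem exposedCount_eq_card (D : TLDiagram n) : exposedCount D = #{a | D.IsExposed a} := by
  rw [exposedCount, Nat.card_eq_fintype_card, Fintype.card_subtype]

theorem exposedCount_le (D : TLDiagram n) : exposedCount D ≤ n := by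
  rw [exposedCount_eq_card]
  conv_rhs => rw [← D.card_filter_isArc]
  exact card_le_card fun a ha => by
    rw [mem_filter] at ha ⊢
    exact ⟨ha.1, ha.2.1⟩

def offset {M N : ℕ} (c : ℕ) (h : c + M ≤ N) (y : Fin M) : Fin N :=
  ⟨c + y, by omega⟩

@[simp] theorem val_offset {M N c : ℕ} (h : c + M ≤ N) (y : Fin M) :
    (offset c h y : ℕ) = c + y := rfl

theorem offset_injective {M N c : ℕ} (h : c + M ≤ N) : Function.Injective (offset c h) :=
  fun y z hyz => Fin.ext (by simpa using congrArg Fin.val hyz)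

theorem offset_lt_offset_iff {M N c : ℕ} (h : c + M ≤ N) {y z : Fin M} :
    offset c h y < offset c h z ↔ y < z := by
  rw [Fin.lt_def, Fin.lt_def, val_offset, val_offset]
  omega

section Glue

variable {m : ℕ}

-- `0` is joined to `2m+1`; `D₁` sits on `[1, 2m]` and `D₂` on `[2m+2, 2n+1]`.
def glueFun (hmn : m ≤ n) (D₁ : TLDiagram m) (D₂ : TLDiagram (n - m))
    (x : Fin (2 * (n + 1))) : Fin (2 * (n + 1)) :=
  if h₀ : x.val = 0 then ⟨2 * m + 1, by omega⟩
  else if h₁ : x.val < 2 * m + 1 then offset 1 (by omega) (D₁.f ⟨x - 1, by omega⟩)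
  else if h₂ : x.val = 2 * m + 1 then ⟨0, by omega⟩
  else offset (2 * m + 2) (by omega) (D₂.f ⟨x - (2 * m + 2), by omega⟩)

variable (hmn : m ≤ n) (D₁ : TLDiagram m) (D₂ : TLDiagram (n - m))

theorem glueFun_zero : glueFun hmn D₁ D₂ ⟨0, by omega⟩ = ⟨2 * m + 1, by omega⟩ := by
  simp [glueFun]

theorem glueFun_apex : glueFun hmn D₁ D₂ ⟨2 * m + 1, by omega⟩ = ⟨0, by omega⟩ := by
  simp [glueFun]

theorem glueFun_inner (y : Fin (2 * m)) :
    glueFun hmn D₁ D₂ (offset 1 (by omega) y) = offset 1 (by omega) (D₁.f y) := by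
  have h₁ : (offset 1 (by omega) y : Fin (2 * (n + 1))).val < 2 * m + 1 := by
    simp only [val_offset]; omega
  rw [glueFun, dif_neg (by simp), dif_pos h₁]
  exact congrArg _ (congrArg _ (Fin.ext (by simp)))

theorem glueFun_outer (y : Fin (2 * (n - m))) :
    glueFun hmn D₁ D₂ (offset (2 * m + 2) (by omega) y) =
      offset (2 * m + 2) (by omega) (D₂.f y) := by
  rw [glueFun, dif_neg (by simp), dif_neg (by simp only [val_offset]; omega),
    dif_neg (by simp only [val_offset]; omega)]
  exact congrArg _ (congrArg _ (Fin.ext (by simp)))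

theorem glue_cases (x : Fin (2 * (n + 1))) :
    x = ⟨0, by omega⟩ ∨ x = ⟨2 * m + 1, by omega⟩ ∨
      (∃ y : Fin (2 * m), x = offset 1 (by omega) y) ∨
      ∃ y : Fin (2 * (n - m)), x = offset (2 * m + 2) (by omega) y := by
  rcases x with ⟨x, hx⟩
  by_cases h0 : x = 0
  · exact Or.inl (Fin.ext h0)
  by_cases h1 : x < 2 * m + 1
  · exact Or.inr (Or.inr (Or.inl ⟨⟨x - 1, by omega⟩, Fin.ext (by simp; omega)⟩))
  by_cases h2 : x = 2 * m + 1
  · exact Or.inr (Or.inl (Fin.ext h2))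
  · exact Or.inr (Or.inr (Or.inr ⟨⟨x - (2 * m + 2), by omega⟩, Fin.ext (by simp; omega)⟩))

def glue : TLDiagram (n + 1) where
  f := glueFun hmn D₁ D₂
  involutive x := by
    rcases glue_cases hmn x with rfl | rfl | ⟨y, rfl⟩ | ⟨y, rfl⟩
    · rw [glueFun_zero, glueFun_apex]
    · rw [glueFun_apex, glueFun_zero]
    · rw [glueFun_inner, glueFun_inner, D₁.involutive]
    · rw [glueFun_outer, glueFun_outer, D₂.involutive]
  noFixedPoint x := by
    rcases glue_cases hmn x with rfl | rfl | ⟨y, rfl⟩ | ⟨y, rfl⟩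
    · rw [glueFun_zero]; simp
    · rw [glueFun_apex]; simp
    · rw [glueFun_inner]; exact fun h => D₁.noFixedPoint y (offset_injective _ h)
    · rw [glueFun_outer]; exact fun h => D₂.noFixedPoint y (offset_injective _ h)
  noncrossing a b := by
    rcases glue_cases hmn a with rfl | rfl | ⟨y, rfl⟩ | ⟨y, rfl⟩ <;>
    rcases glue_cases hmn b with rfl | rfl | ⟨z, rfl⟩ | ⟨z, rfl⟩ <;>
    simp only [glueFun_zero, glueFun_apex, glueFun_inner, glueFun_outer, Fin.lt_def,
      val_offset] <;>
    first
    | omega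
    | exact fun h₁ h₂ h₃ => D₁.noncrossing y z (by omega) (by omega) (by omega)
    | exact fun h₁ h₂ h₃ => D₂.noncrossing y z (by omega) (by omega) (by omega)

@[simp] theorem glue_f : (glue hmn D₁ D₂).f = glueFun hmn D₁ D₂ := rfl

theorem glue_injective2 : Function.Injective2 (glue (m := m) hmn) := by
  intro D₁ D₁' D₂ D₂' h
  constructor <;> ext y : 2
  · apply offset_injective (c := 1) (N := 2 * (n + 1)) (by omega)
    have := congrArg (fun D => D.f (offset 1 (by omega) y)) h
    rwa [glue_f, glue_f, glueFun_inner, glueFun_inner] at this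
  · apply offset_injective (c := 2 * m + 2) (N := 2 * (n + 1)) (by omega)
    have := congrArg (fun D => D.f (offset (2 * m + 2) (by omega) y)) h
    rwa [glue_f, glue_f, glueFun_outer, glueFun_outer] at this

theorem isExposed_glue_zero : (glue hmn D₁ D₂).IsExposed ⟨0, by omega⟩ := by
  refine ⟨?_, fun c hc => (Fin.not_lt_zero c) hc.1⟩
  rw [glue_f, glueFun_zero, Fin.mk_lt_mk]
  omega

theorem not_isExposed_glue_apex : ¬(glue hmn D₁ D₂).IsExposed ⟨2 * m + 1, by omega⟩ := by
  rintro ⟨h, -⟩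
  rw [glue_f, glueFun_apex, Fin.mk_lt_mk] at h
  omega

theorem not_isExposed_glue_inner (y : Fin (2 * m)) :
    ¬(glue hmn D₁ D₂).IsExposed (offset 1 (by omega) y) := by
  rintro ⟨-, h⟩
  apply h ⟨0, by omega⟩
  simp only [glue_f, glueFun_zero, glueFun_inner, Fin.lt_def, val_offset]
  omega

theorem isExposed_glue_outer_iff (y : Fin (2 * (n - m))) :
    (glue hmn D₁ D₂).IsExposed (offset (2 * m + 2) (by omega) y) ↔ D₂.IsExposed y := by
  simp only [IsExposed, glue_f, glueFun_outer, offset_lt_offset_iff]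
  refine and_congr_right fun _ => ⟨fun h c hc => ?_, fun h c hc => ?_⟩
  · apply h (offset (2 * m + 2) (by omega) c)
    rwa [glueFun_outer, offset_lt_offset_iff, offset_lt_offset_iff]
  · rcases glue_cases hmn c with rfl | rfl | ⟨z, rfl⟩ | ⟨z, rfl⟩
    · simp only [glueFun_zero, Fin.lt_def, val_offset] at hc
      omega
    · simp only [glueFun_apex, Fin.lt_def, val_offset] at hc
      omega
    · simp only [glueFun_inner, Fin.lt_def, val_offset] at hc
      omega
    · rw [glueFun_outer, offset_lt_offset_iff, offset_lt_offset_iff] at hc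
      exact h z hc

theorem exposedCount_glue : exposedCount (glue hmn D₁ D₂) = exposedCount D₂ + 1 := by
  have hset : ({a | (glue hmn D₁ D₂).IsExposed a} : Finset _) = insert ⟨0, by omega⟩
      (({y | D₂.IsExposed y} : Finset _).map
        ⟨offset (2 * m + 2) (by omega), offset_injective _⟩) := by
    ext a
    rw [mem_filter_univ]
    rcases glue_cases hmn a with rfl | rfl | ⟨y, rfl⟩ | ⟨y, rfl⟩
    · exact iff_of_true (isExposed_glue_zero hmn D₁ D₂) (mem_insert_self _ _)
    · simp [not_isExposed_glue_apex, Fin.ext_iff]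
      omega
    · simp [not_isExposed_glue_inner, Fin.ext_iff]
      omega
    · simp [isExposed_glue_outer_iff, Fin.ext_iff]
  rw [exposedCount_eq_card, exposedCount_eq_card, hset, card_insert_of_notMem, card_map]
  simp [Fin.ext_iff]

end Glue

section Restrict

variable {N M c : ℕ} (D : TLDiagram N) (h : c + 2 * M ≤ 2 * N)
  (hD : ∀ y : Fin (2 * M), ∃ z, D.f (offset c h y) = offset c h z)

noncomputable def restrict : TLDiagram M where
  f y := (hD y).choose
  involutive y := by
    apply offset_injective h
    rw [← (hD _).choose_spec, ← (hD y).choose_spec, D.involutive]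
  noFixedPoint y hy := by
    apply D.noFixedPoint (offset c h y)
    rw [(hD y).choose_spec, hy]
  noncrossing a b hab hb ha := by
    apply D.noncrossing (offset c h a) (offset c h b) ((offset_lt_offset_iff h).2 hab)
    · rw [(hD a).choose_spec, offset_lt_offset_iff]; exact hb
    · rw [(hD a).choose_spec, (hD b).choose_spec, offset_lt_offset_iff]; exact ha

theorem offset_restrict_f (y : Fin (2 * M)) :
    offset c h ((D.restrict h hD).f y) = D.f (offset c h y) :=
  (hD y).choose_spec.symm

end Restrict

theorem f_mem_Ioo (D : TLDiagram n) {a x : Fin (2 * n)} (hx : x ∈ Set.Ioo a (D.f a)) :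
    D.f x ∈ Set.Ioo a (D.f a) := by
  obtain ⟨hax, hxf⟩ := hx
  have hne_a : D.f x ≠ a := by
    rintro h
    rw [← h, D.involutive] at hxf
    exact lt_irrefl _ hxf
  have hne_fa : D.f x ≠ D.f a := fun h => (D.f_injective h ▸ hax).false
  rcases lt_trichotomy (D.f x) a with h | h | h
  · exact (D.noncrossing (D.f x) a h (by rwa [D.involutive]) (by rwa [D.involutive])).elim
  · exact (hne_a h).elim
  rcases lt_trichotomy (D.f x) (D.f a) with h' | h' | h'
  · exact ⟨h, h'⟩
  · exact (hne_fa h').elim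
  · exact (D.noncrossing a x hax hxf h').elim

section Decomposition

variable (D : TLDiagram (n + 1))

-- The points strictly inside the arc at `0` are paired among themselves.
theorem exists_f_zero_eq : ∃ m, (D.f ⟨0, by omega⟩ : ℕ) = 2 * m + 1 := by
  have h₀ : (D.f ⟨0, by omega⟩ : ℕ) ≠ 0 := fun h => D.noFixedPoint _ (Fin.ext h)
  have h := D.card_eq_two_mul_card_filter_isArc (s := Ioo ⟨0, by omega⟩ (D.f ⟨0, by omega⟩))
    fun x hx => by
      rw [mem_Ioo] at hx ⊢
      exact D.f_mem_Ioo hx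
  simp only [Fin.card_Ioo] at h
  exact ⟨((D.f ⟨0, by omega⟩ : ℕ) - 1) / 2, by omega⟩

variable {m : ℕ}

theorem exists_f_offset_inner (hmn : m ≤ n) (hm : (D.f ⟨0, by omega⟩ : ℕ) = 2 * m + 1)
    (y : Fin (2 * m)) :
    ∃ z : Fin (2 * m), D.f (offset 1 (by omega) y) = offset 1 (by omega) z := by
  have h := D.f_mem_Ioo (a := ⟨0, by omega⟩) (x := offset 1 (by omega) y)
    ⟨by simp only [Fin.lt_def, val_offset]; omega, by rw [Fin.lt_def, hm, val_offset]; omega⟩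
  simp only [Set.mem_Ioo, Fin.lt_def, hm] at h
  generalize D.f _ = z at h ⊢
  exact ⟨⟨z - 1, by omega⟩, Fin.ext (by simp; omega)⟩

theorem exists_f_offset_outer (hmn : m ≤ n) (hm : (D.f ⟨0, by omega⟩ : ℕ) = 2 * m + 1)
    (y : Fin (2 * (n - m))) : ∃ z : Fin (2 * (n - m)),
      D.f (offset (2 * m + 2) (by omega) y) = offset (2 * m + 2) (by omega) z := by
  generalize hx : offset (2 * m + 2) _ y = x
  have hxv : (x : ℕ) = 2 * m + 2 + y := by rw [← hx, val_offset]
  have h₀ : (D.f x : ℕ) ≠ 0 := fun h => by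
    have := congrArg Fin.val (D.involutive x)
    rw [show D.f x = ⟨0, by omega⟩ from Fin.ext h, hm] at this
    omega
  have h₁ : (D.f x : ℕ) ≠ 2 * m + 1 := fun h => by
    have := congrArg Fin.val (D.f_injective (Fin.ext (h.trans hm.symm)))
    simp only at this
    omega
  have h₂ : ¬(D.f x : ℕ) < 2 * m + 1 := fun h => by
    have := D.f_mem_Ioo (a := ⟨0, by omega⟩) (x := D.f x)
      ⟨by simp only [Fin.lt_def]; omega, by rw [Fin.lt_def, hm]; omega⟩
    rw [D.involutive, Set.mem_Ioo, Fin.lt_def, Fin.lt_def, hm] at this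
    omega
  exact ⟨⟨(D.f x : ℕ) - (2 * m + 2), by omega⟩, Fin.ext (by simp; omega)⟩

theorem exists_eq_glue :
    ∃ (m : ℕ) (hmn : m ≤ n) (D₁ : TLDiagram m) (D₂ : TLDiagram (n - m)),
      glue hmn D₁ D₂ = D := by
  obtain ⟨m, hm⟩ := D.exists_f_zero_eq
  have hmn : m ≤ n := by have := (D.f ⟨0, by omega⟩).isLt; omega
  refine ⟨m, hmn, D.restrict _ (D.exists_f_offset_inner hmn hm),
    D.restrict _ (D.exists_f_offset_outer hmn hm), ?_⟩
  ext x : 2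
  rcases glue_cases hmn x with rfl | rfl | ⟨y, rfl⟩ | ⟨y, rfl⟩
  · rw [glue_f, glueFun_zero]
    exact Fin.ext hm.symm
  · rw [glue_f, glueFun_apex,
      show (⟨2 * m + 1, _⟩ : Fin (2 * (n + 1))) = D.f ⟨0, by omega⟩ from Fin.ext hm.symm,
      D.involutive]
  · rw [glue_f, glueFun_inner, offset_restrict_f]
  · rw [glue_f, glueFun_outer, offset_restrict_f]

end Decomposition

end TLDiagram

theorem Finset.Nat.sum_antidiagonalTuple_succ {M : Type*} [AddCommMonoid M] (k N : ℕ)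
    (F : (Fin (k + 1) → ℕ) → M) :
    ∑ t ∈ antidiagonalTuple (k + 1) N, F t =
      ∑ p ∈ antidiagonal N, ∑ s ∈ antidiagonalTuple k p.2, F (Fin.cons p.1 s) := by
  simp only [Finset.sum, Finset.Nat.antidiagonalTuple, Multiset.Nat.antidiagonalTuple,
    List.Nat.antidiagonalTuple, HasAntidiagonal.antidiagonal, Multiset.Nat.antidiagonal,
    Multiset.map_coe, Multiset.sum_coe, List.flatMap_def, List.map_flatten, List.sum_flatten,
    List.map_map, Function.comp_def]

theorem chi_zero_zero : chi 0 0 = 1 := by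
  simp [chi]

theorem chi_zero {n : ℕ} (hn : n ≠ 0) : chi n 0 = 0 := by
  obtain ⟨n, rfl⟩ := Nat.exists_eq_succ_of_ne_zero hn
  simp [chi]

theorem chi_succ_succ {n k : ℕ} (hk : k ≤ n) :
    chi (n + 1) (k + 1) = ∑ i ∈ range (n - k + 1), catalan i * chi (n - i) k := by
  rw [chi, show n + 1 - (k + 1) = n - k by omega, Finset.Nat.sum_antidiagonalTuple_succ,
    Finset.Nat.sum_antidiagonal_eq_sum_range_succ_mk]
  refine sum_congr rfl fun i hi => ?_
  rw [chi, mul_sum, show n - i - k = n - k - i by omega]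
  simp [Fin.prod_univ_succ]

namespace TLDiagram

variable {n : ℕ}

def glueSigma (x : Σ i : Fin (n + 1), TLDiagram i × TLDiagram (n - i)) : TLDiagram (n + 1) :=
  glue (Nat.lt_succ_iff.1 x.1.2) x.2.1 x.2.2

theorem glueSigma_bijective : Function.Bijective (glueSigma (n := n)) := by
  constructor
  · rintro ⟨⟨m, hm⟩, D₁, D₂⟩ ⟨⟨m', hm'⟩, D₁', D₂'⟩ h
    obtain rfl : m = m' := by
      have := congrArg (fun D : TLDiagram (n + 1) => (D.f ⟨0, by omega⟩ : ℕ)) h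
      simp only [glueSigma, glue_f, glueFun_zero] at this
      omega
    obtain ⟨rfl, rfl⟩ := glue_injective2 _ h
    rfl
  · intro D
    obtain ⟨m, hmn, D₁, D₂, rfl⟩ := D.exists_eq_glue
    exact ⟨⟨⟨m, Nat.lt_succ_of_le hmn⟩, D₁, D₂⟩, rfl⟩

theorem sum_eq_sum_glue {M : Type*} [AddCommMonoid M] (g : TLDiagram (n + 1) → M) :
    ∑ D, g D = ∑ i : Fin (n + 1), ∑ D₁ : TLDiagram i, ∑ D₂ : TLDiagram (n - i),
      g (glue (Nat.lt_succ_iff.1 i.2) D₁ D₂) := by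
  rw [← glueSigma_bijective.sum_comp g, Fintype.sum_sigma]
  simp only [Fintype.sum_prod_type, glueSigma]

theorem card_zero : Fintype.card (TLDiagram 0) = 1 :=
  Fintype.card_eq_one_iff.2 ⟨⟨id, fun _ => rfl, fun x => x.elim0, fun a => a.elim0⟩,
    fun _ => ext (funext fun x => x.elim0)⟩

theorem card_eq_catalan (n : ℕ) : Fintype.card (TLDiagram n) = catalan n := by
  induction n using Nat.strong_induction_on with
  | _ n ih =>
    cases n with
    | zero => exact card_zero.trans catalan_zero.symm
    | succ n =>
      rw [Fintype.card_eq_sum_ones, sum_eq_sum_glue, catalan_succ]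
      refine sum_congr rfl fun i _ => ?_
      simp only [sum_const, card_univ, smul_eq_mul, mul_one, ih i (by omega),
        ih (n - i) (by omega)]

theorem sum_exposedCount {M : Type*} [AddCommMonoid M] (n : ℕ) (g : ℕ → M) :
    ∑ D : TLDiagram n, g (exposedCount D) = ∑ k ∈ range (n + 1), chi n k • g k := by
  induction n using Nat.strong_induction_on generalizing g with
  | _ n ih =>
    cases n with
    | zero =>
      have he (D : TLDiagram 0) : exposedCount D = 0 := by
        simpa using D.exposedCount_le
      simp [he, card_zero, chi_zero_zero]
    | succ n =>
      calc ∑ D, g (exposedCount D)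
          = ∑ i : Fin (n + 1), ∑ _D₁ : TLDiagram i, ∑ D₂ : TLDiagram (n - i),
              g (exposedCount D₂ + 1) := by
            simp only [sum_eq_sum_glue, exposedCount_glue]
        _ = ∑ i ∈ range (n + 1), ∑ k ∈ range (n - i + 1),
              (catalan i * chi (n - i) k) • g (k + 1) := by
            rw [← Fin.sum_univ_eq_sum_range
              (fun i => ∑ k ∈ range (n - i + 1), (catalan i * chi (n - i) k) • g (k + 1))]
            refine sum_congr rfl fun i _ => ?_
            rw [sum_const, card_univ, card_eq_catalan, ih (n - i) (by omega) fun k => g (k + 1),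
              smul_sum]
            simp only [mul_smul]
        _ = ∑ k ∈ range (n + 1), ∑ i ∈ range (n - k + 1),
              (catalan i * chi (n - i) k) • g (k + 1) :=
            sum_comm' fun i k => by simp only [mem_range]; omega
        _ = ∑ k ∈ range (n + 2), chi (n + 1) k • g k := by
            rw [sum_range_succ' _ (n + 1), chi_zero n.succ_ne_zero, zero_smul, add_zero]
            refine sum_congr rfl fun k hk => ?_
            rw [chi_succ_succ (by simpa [Nat.lt_succ_iff] using hk), sum_smul]

end TLDiagram

theorem Nat.card_subtype_forall_imp_eq_zero {α M : Type*} [Fintype α] [Zero M]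
    (p : α → Prop) [DecidablePred p] :
    Nat.card {g : α → M // ∀ a, p a → g a = 0} = Nat.card M ^ #{a | ¬p a} := by
  rw [Nat.card_congr (Equiv.subtypePiEquivPi (p := fun a m => p a → m = 0)), Nat.card_pi]
  have hpt : ∀ a, Nat.card {m : M // p a → m = 0} = if p a then 1 else Nat.card M := by
    intro a
    by_cases h : p a <;> simp [h]
  simp only [hpt, prod_ite, prod_const_one, one_mul, prod_const]

abbrev TLDiagram.Blobs {n : ℕ} (D : TLDiagram n) :=
  {b : Fin (2 * n) → Bool // ∀ a, b a = true → D.IsExposed a}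

abbrev TLDiagram.Beads (d : ℕ) {n : ℕ} (D : TLDiagram n) (b : Fin (2 * n) → Bool) :=
  {g : Fin (2 * n) → ZMod d // ∀ a, ¬D.IsArc a ∨ b a = true → g a = 0}

def AbacusHookDiagram.equivSigma {d n : ℕ} :
    AbacusHookDiagram d n ≃ (Σ D : TLDiagram n, Σ b : D.Blobs, D.Beads d b.1) × ZMod d where
  toFun x := (⟨x.base, ⟨x.blob, x.blob_exposed⟩, ⟨x.beads, x.beads_arc⟩⟩, x.hookBeads)
  invFun y := ⟨y.1.1, y.1.2.1.1, y.1.2.1.2, y.1.2.2.1, y.1.2.2.2, y.2⟩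
  left_inv _ := rfl
  right_inv _ := rfl

namespace TLDiagram

variable {n : ℕ}

theorem card_beads (d : ℕ) (D : TLDiagram n) {b : Fin (2 * n) → Bool}
    (hb : ∀ a, b a = true → D.IsExposed a) :
    Nat.card (D.Beads d b) = d ^ (n - #{a | b a = true}) := by
  rw [Nat.card_subtype_forall_imp_eq_zero, Nat.card_zmod]
  congr 1
  have hsplit : filter (fun a => ¬(¬D.IsArc a ∨ b a = true)) univ =
      filter (fun a => D.IsArc a) univ \ filter (fun a => b a = true) univ := by
    ext a
    simp only [mem_filter_univ, mem_sdiff, not_or, not_not]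
  have hsub : filter (fun a => b a = true) univ ⊆ filter (fun a => D.IsArc a) univ :=
    fun a ha => (mem_filter_univ a).2 (hb a ((mem_filter_univ a).1 ha)).1
  rw [hsplit, card_sdiff_of_subset hsub, card_filter_isArc]

theorem sum_blobs (d : ℕ) (D : TLDiagram n) :
    ∑ b : D.Blobs, d ^ (n - #{a | b.1 a = true}) =
      d ^ (n - exposedCount D) * (1 + d) ^ exposedCount D := by
  set E : Finset (Fin (2 * n)) := {a | D.IsExposed a}
  have hE : #E ≤ n := D.exposedCount_eq_card ▸ D.exposedCount_le
  calc ∑ b : D.Blobs, d ^ (n - #{a | b.1 a = true})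
      = ∑ t ∈ E.powerset, d ^ (n - #t) := by
        refine sum_nbij' (fun b => filter (fun a => b.1 a = true) univ)
          (fun t => ⟨fun a => decide (a ∈ t ∧ D.IsExposed a), by simp⟩) ?_ ?_ ?_ ?_ ?_
        · intro b _
          simpa [E, subset_iff] using b.2
        · simp
        · intro b _
          ext a
          simpa using fun h => b.2 a h
        · intro t ht
          ext a
          simpa using fun h => (mem_filter_univ _).1 (mem_powerset.1 ht h)
        · simp
    _ = ∑ t ∈ E.powerset, d ^ (n - #E) * (1 ^ #t * d ^ (#E - #t)) := by
        refine sum_congr rfl fun t ht => ?_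
        rw [one_pow, one_mul, ← pow_add]
        have := card_le_card (mem_powerset.1 ht)
        congr 1
        omega
    _ = d ^ (n - exposedCount D) * (1 + d) ^ exposedCount D := by
        rw [← mul_sum, sum_pow_mul_eq_add_pow, exposedCount_eq_card]

theorem card_blobs_beads (d : ℕ) [NeZero d] (D : TLDiagram n) :
    Nat.card (Σ b : D.Blobs, D.Beads d b.1) =
      d ^ (n - exposedCount D) * (1 + d) ^ exposedCount D := by
  rw [Nat.card_sigma, ← D.sum_blobs d]
  exact sum_congr rfl fun b _ => D.card_beads d b.2

end TLDiagram

/-- the cardinality of the abacus hook monoid `ℌ_{d,n}` is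
`d^{n+1} ⬝ Σ_{k=1}^{n} χ_k^{(n)} d^{-k} (1+d)^k
  = d ⬝ Σ_{k=1}^{n} χ_k^{(n)} d^{n-k} (1+d)^k`. -/
theorem stmt18 (d n : ℕ) (hd : 1 ≤ d) (hn : 1 ≤ n) :
    Nat.card (AbacusHookDiagram d n) =
      d * ∑ k ∈ Finset.Icc 1 n, chi n k * d ^ (n - k) * (1 + d) ^ k := by
  have : NeZero d := ⟨by omega⟩
  rw [Nat.card_congr AbacusHookDiagram.equivSigma, Nat.card_prod, Nat.card_zmod, mul_comm,
    Nat.card_sigma]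
  simp only [TLDiagram.card_blobs_beads]
  rw [TLDiagram.sum_exposedCount n fun k => d ^ (n - k) * (1 + d) ^ k, sum_range_succ',
    chi_zero (by omega), zero_smul, add_zero,
    ← Ico_add_one_right_eq_Icc, sum_Ico_eq_sum_range, Nat.add_sub_cancel]
  simp only [smul_eq_mul, mul_assoc, add_comm 1]
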